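/- Let τ ∈ ℂ with Im τ > 0, v ∈ ℂ, e(z) = −exp(−2πi(z+v+τ)), and let N ∈ Mat_{n²×n²}(ℂ) be the nilpotent matrix built from the blocks A₀, …, A_{n−1} as in the definition below. Let V = {f : ℂ → ℂ holomorphic : f(z+1) = f(z), f(z+τ) = e(z)f(z)} and W = {F : ℂ → ℂ^{n²} holomorphic : F(z+1) = F(z), F(z+τ) = e(z)·exp(N)·F(z)}. Then the map δ : V ⊗ ℂ^{n²} → W defined by δ(f ⊗ u) = Σ_{m≥0} (∇^m f / m!) · N^m u (a finite sum since N is nilpotent), where ∇ = −(1/(2πi)) d/dz, is a well-defined ℂ-linear isomorphism. -/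

import Mathlib

open Complex Matrix
open scoped TensorProduct

noncomputable section

/-- π as a complex number. -/
def πc : ℂ := Real.pi

/-- The blocks of the matrix N: A₀ is the strictly lower-triangular Toeplitz matrix with
entries a_{i−j} = (−1)^{i−j}/(i−j) below the diagonal, and A_k = −a_k·Id for k ≥ 1. -/
def Ablock (n : ℕ) (k : ℕ) : Matrix (Fin n) (Fin n) ℂ :=
  if k = 0 then
    Matrix.of fun i j : Fin n =>
      if (j : ℕ) < (i : ℕ) then
        (-1 : ℂ) ^ ((i : ℕ) - (j : ℕ)) / ((((i : ℕ) - (j : ℕ) : ℕ)) : ℂ)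
      else 0
  else (-((-1 : ℂ) ^ k / (k : ℂ))) • (1 : Matrix (Fin n) (Fin n) ℂ)

/-- The n²×n² block upper-triangular block-Toeplitz matrix N whose (p,q)-block equals
A_{q−p} for q ≥ p and 0 otherwise; rows and columns are indexed by pairs
(block index, index inside the block). -/
def Nmat (n : ℕ) : Matrix (Fin n × Fin n) (Fin n × Fin n) ℂ :=
  Matrix.of fun pi qj : Fin n × Fin n =>
    if (pi.1 : ℕ) ≤ (qj.1 : ℕ) then Ablock n ((qj.1 : ℕ) - (pi.1 : ℕ)) pi.2 qj.2 else 0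

/-- The differential operator ∇ = −(1/(2πi)) d/dz. -/
def nabla (f : ℂ → ℂ) : ℂ → ℂ := fun z => -(1 / (2 * πc * I)) * deriv f z

/-- The space of holomorphic functions f with f(z+1) = f(z) and f(z+τ) = φ(z)·f(z). -/
def Vsp (τ : ℂ) (φ : ℂ → ℂ) : Submodule ℂ (ℂ → ℂ) where
  carrier := {f | Differentiable ℂ f ∧ (∀ z, f (z + 1) = f z) ∧ ∀ z, f (z + τ) = φ z * f z}
  add_mem' := by
    rintro f g ⟨hd, hp, hq⟩ ⟨gd, gp, gq⟩
    refine ⟨hd.add gd, fun z => ?_, fun z => ?_⟩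
    · show f (z + 1) + g (z + 1) = f z + g z
      rw [hp, gp]
    · show f (z + τ) + g (z + τ) = φ z * (f z + g z)
      rw [hq, gq, mul_add]
  zero_mem' := ⟨differentiable_const 0, fun z => rfl, fun z => by simp⟩
  smul_mem' := by
    rintro a f ⟨hd, hp, hq⟩
    refine ⟨hd.const_smul a, fun z => ?_, fun z => ?_⟩
    · show a • f (z + 1) = a • f z
      rw [hp]
    · show a • f (z + τ) = φ z * (a • f z)
      rw [hq, smul_eq_mul, smul_eq_mul, mul_left_comm]

/-- The space of holomorphic vector-valued functions F with F(z+1) = F(z) and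
F(z+τ) = e(z)·exp(N)·F(z). -/
def Wsp (n : ℕ) (τ : ℂ) (e : ℂ → ℂ) : Submodule ℂ (ℂ → (Fin n × Fin n → ℂ)) where
  carrier := {F | (∀ i, Differentiable ℂ fun z => F z i) ∧ (∀ z, F (z + 1) = F z) ∧
    ∀ z, F (z + τ) = e z • (NormedSpace.exp (Nmat n)).mulVec (F z)}
  add_mem' := by
    rintro F G ⟨hd, hp, hq⟩ ⟨gd, gp, gq⟩
    refine ⟨fun i => ?_, fun z => ?_, fun z => ?_⟩
    · show Differentiable ℂ fun z => F z i + G z i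
      exact (hd i).add (gd i)
    · show F (z + 1) + G (z + 1) = F z + G z
      rw [hp, gp]
    · show F (z + τ) + G (z + τ) = e z • (NormedSpace.exp (Nmat n)).mulVec (F z + G z)
      rw [hq, gq, Matrix.mulVec_add, smul_add]
  zero_mem' := by
    refine ⟨fun i => ?_, fun z => rfl, fun z => by simp⟩
    show Differentiable ℂ fun _ => (0 : ℂ)
    exact differentiable_const 0
  smul_mem' := by
    rintro a F ⟨hd, hp, hq⟩
    refine ⟨fun i => ?_, fun z => ?_, fun z => ?_⟩
    · show Differentiable ℂ fun z => a • F z i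
      exact (hd i).const_smul a
    · show a • F (z + 1) = a • F z
      rw [hp]
    · show a • F (z + τ) = e z • (NormedSpace.exp (Nmat n)).mulVec (a • F z)
      rw [hq, Matrix.mulVec_smul, smul_comm]

/-- The function δ(f ⊗ u) = Σ_m (∇^m f/m!)·N^m u. -/
def deltaFun (n : ℕ) (f : ℂ → ℂ) (u : Fin n × Fin n → ℂ) : ℂ → (Fin n × Fin n → ℂ) :=
  fun z => ∑ m ∈ Finset.range (2 * n), ((m.factorial : ℂ))⁻¹ •
    (nabla^[m] f z) • ((Nmat n) ^ m).mulVec u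

/-!
Identify `V ⊗ ℂ^{n²}` with `V^{n²}`. On entire maps `ℂ → ℂ^{n²}` the operator `N∇` (`∇` acting
componentwise) is nilpotent, and `δ` is `exp (N∇)`, with inverse `exp (-N∇)`. Both commute with
translations, so they preserve `1`-periodicity. Since `∇e = e`, the Leibniz rule gives
`∇ ∘ e = e ∘ (∇ + 1)`, hence `exp (N∇) ∘ e = e ∘ exp N ∘ exp (N∇)`: `exp (N∇)` turns
`F(z+τ) = e(z) F(z)` into `F(z+τ) = e(z) exp(N) F(z)`, and `exp (-N∇)` turns it back.
-/

theorem NormedSpace.exp_eq_exp_of_isNilpotent {𝔸 : Type*} [Ring 𝔸] [Algebra ℚ 𝔸]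
    [TopologicalSpace 𝔸] [IsTopologicalRing 𝔸] [T2Space 𝔸] {x : 𝔸} (hx : IsNilpotent x) :
    NormedSpace.exp x = IsNilpotent.exp x := by
  obtain ⟨k, hk⟩ := hx
  rw [NormedSpace.exp_eq_tsum_rat, IsNilpotent.exp_eq_sum hk]
  refine tsum_eq_sum fun m hm => ?_
  rw [pow_eq_zero_of_le (by simpa using hm) hk, smul_zero]

theorem IsNilpotent.commute_exp_left {A : Type*} [Ring A] [Module ℚ A] {a b : A}
    (h : Commute a b) (ha : IsNilpotent a) : Commute (IsNilpotent.exp a) b := by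
  obtain ⟨k, hk⟩ := ha
  rw [IsNilpotent.exp_eq_sum hk]
  exact Commute.sum_left _ _ _ fun i _ => (h.pow_left i).smul_left _

theorem Matrix.pow_eq_zero_of_lt_grading {ι R : Type*} [Fintype ι] [DecidableEq ι] [Semiring R]
    {M : Matrix ι ι R} (ψ : ι → ℕ) {B : ℕ} (hM : ∀ x y, M x y ≠ 0 → ψ x < ψ y)
    (hB : ∀ x, ψ x < B) : M ^ B = 0 := by
  have grading : ∀ k x y, (M ^ k) x y ≠ 0 → ψ x + k ≤ ψ y := by
    intro k
    induction k with
    | zero =>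
      intro x y hxy
      obtain rfl : x = y := by_contra fun h => hxy (Matrix.one_apply_ne h)
      simp
    | succ k ih =>
      intro x y hxy
      rw [pow_succ, Matrix.mul_apply] at hxy
      obtain ⟨j, -, hj⟩ := Finset.exists_ne_zero_of_sum_ne_zero hxy
      have := ih x j (left_ne_zero_of_mul hj)
      have := hM j y (right_ne_zero_of_mul hj)
      omega
  ext x y
  by_contra hxy
  have := grading B x y hxy
  have := hB y
  omega

theorem Nmat_pow_eq_zero (n : ℕ) : Nmat n ^ (2 * n) = 0 := by
  -- `A₀` is strictly lower triangular and the blocks `A_k`, `k ≥ 1`, are strictly above the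
  -- block diagonal, so `N` raises the grading `(p, i) ↦ p + (n - 1 - i)`, which is `< 2n`.
  refine Matrix.pow_eq_zero_of_lt_grading (fun x => x.1 + (n - 1 - x.2)) ?_ fun x => by omega
  rintro ⟨p, i⟩ ⟨q, j⟩ hpq
  have := i.2
  have := j.2
  simp only [Nmat, Ablock, Matrix.of_apply] at hpq ⊢
  split_ifs at hpq with hpq' hqp
  · have : (j : ℕ) < i := by_contra fun h => hpq (by rw [Matrix.of_apply, if_neg h])
    omega
  · obtain rfl : i = j := by_contra fun h => hpq (by simp [Matrix.one_apply_ne h])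
    omega
  · exact absurd rfl hpq

lemma nabla_add {f g : ℂ → ℂ} (hf : Differentiable ℂ f) (hg : Differentiable ℂ g) :
    nabla (f + g) = nabla f + nabla g := by
  ext z
  simp only [nabla, Pi.add_apply, deriv_add (hf z) (hg z), mul_add]

lemma nabla_const_mul (a : ℂ) (f : ℂ → ℂ) :
    nabla (fun z => a * f z) = fun z => a * nabla f z := by
  ext z
  simp only [nabla, deriv_const_mul_field']
  ring

lemma nabla_iterate_const_mul (a : ℂ) (f : ℂ → ℂ) (m : ℕ) :
    nabla^[m] (fun z => a * f z) = fun z => a * nabla^[m] f z := by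
  induction m with
  | zero => rfl
  | succ m ih =>
    rw [Function.iterate_succ_apply', ih, nabla_const_mul, Function.iterate_succ_apply']

lemma nabla_mul {f g : ℂ → ℂ} (hf : Differentiable ℂ f) (hg : Differentiable ℂ g) (z : ℂ) :
    nabla (fun w => f w * g w) z = nabla f z * g z + f z * nabla g z := by
  simp only [nabla, deriv_fun_mul (hf z) (hg z)]
  ring

lemma nabla_comp_add_const (f : ℂ → ℂ) (t z : ℂ) :
    nabla (fun w => f (w + t)) z = nabla f (z + t) := by
  simp only [nabla, deriv_comp_add_const]

lemma Differentiable.nabla {f : ℂ → ℂ} (hf : Differentiable ℂ f) : Differentiable ℂ (nabla f) :=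
  hf.deriv.const_mul _

lemma differentiable_neg_cexp_affine (v τ : ℂ) :
    Differentiable ℂ fun z => -Complex.exp (-(2 * πc * I) * (z + v + τ)) := by
  fun_prop

lemma nabla_neg_cexp_affine (v τ : ℂ) :
    nabla (fun z => -Complex.exp (-(2 * πc * I) * (z + v + τ))) =
      fun z => -Complex.exp (-(2 * πc * I) * (z + v + τ)) := by
  have hπ : πc ≠ 0 := Complex.ofReal_ne_zero.mpr Real.pi_ne_zero
  ext z
  have h := ((((hasDerivAt_id' z).add_const v).add_const τ).const_mul (-(2 * πc * I))).cexp.fun_neg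
  rw [nabla, h.deriv]
  field_simp

section Operators

variable {ι : Type*}

variable (ι) in
def entireMaps : Submodule ℂ (ℂ → ι → ℂ) where
  carrier := {F | ∀ i, Differentiable ℂ fun z => F z i}
  add_mem' hF hG i := (hF i).add (hG i)
  zero_mem' _ := differentiable_const 0
  smul_mem' a _ hF i := (hF i).const_smul a

def nablaOp : Module.End ℂ (entireMaps ι) where
  toFun F := ⟨fun z i => nabla (fun w => F.1 w i) z, fun i => (F.2 i).nabla⟩
  map_add' F G := by
    ext z i
    exact congrFun (nabla_add (F.2 i) (G.2 i)) z
  map_smul' a F := by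
    ext z i
    exact congrFun (nabla_const_mul a fun w => F.1 w i) z

@[simp] lemma nablaOp_apply (F : entireMaps ι) (z : ℂ) (i : ι) :
    (nablaOp F : ℂ → ι → ℂ) z i = nabla (fun w => (F : ℂ → ι → ℂ) w i) z := rfl

lemma nablaOp_pow_apply (m : ℕ) (F : entireMaps ι) (z : ℂ) (i : ι) :
    ((nablaOp ^ m) F : ℂ → ι → ℂ) z i = nabla^[m] (fun w => (F : ℂ → ι → ℂ) w i) z := by
  induction m generalizing z with
  | zero => rfl
  | succ m ih =>
    rw [pow_succ', Module.End.mul_apply, nablaOp_apply, Function.iterate_succ_apply']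
    exact congrArg (nabla · z) (funext ih)

def translateOp (t : ℂ) : Module.End ℂ (entireMaps ι) where
  toFun F := ⟨fun z => F.1 (z + t), fun i => (F.2 i).comp (differentiable_id.add_const t)⟩
  map_add' _ _ := rfl
  map_smul' _ _ := rfl

@[simp] lemma translateOp_apply (t : ℂ) (F : entireMaps ι) (z : ℂ) :
    (translateOp t F : ℂ → ι → ℂ) z = (F : ℂ → ι → ℂ) (z + t) := rfl

def mulOp (φ : ℂ → ℂ) (hφ : Differentiable ℂ φ) : Module.End ℂ (entireMaps ι) where
  toFun F := ⟨fun z => φ z • F.1 z, fun i => hφ.mul (F.2 i)⟩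
  map_add' F G := by ext z : 2; exact smul_add _ _ _
  map_smul' a F := by ext z : 2; exact smul_comm (φ z) a (F.1 z)

@[simp] lemma mulOp_apply (φ : ℂ → ℂ) (hφ : Differentiable ℂ φ) (F : entireMaps ι) (z : ℂ) :
    (mulOp φ hφ F : ℂ → ι → ℂ) z = φ z • (F : ℂ → ι → ℂ) z := rfl

lemma commute_translateOp_nablaOp (t : ℂ) : Commute (translateOp t) (nablaOp (ι := ι)) := by
  ext F z i
  exact (nabla_comp_add_const _ t z).symm

lemma nablaOp_mul_mulOp {φ : ℂ → ℂ} (hφ : Differentiable ℂ φ) (hφ' : nabla φ = φ) :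
    nablaOp * mulOp (ι := ι) φ hφ = mulOp φ hφ * (nablaOp + 1) := by
  ext F z i
  simp only [Module.End.mul_apply, nablaOp_apply, mulOp_apply, Pi.smul_apply, smul_eq_mul,
    nabla_mul hφ (F.2 i), hφ', LinearMap.add_apply, Module.End.one_apply, Submodule.coe_add,
    Pi.add_apply]
  ring

variable [Fintype ι]

lemma differentiable_mulVec_apply {F : ℂ → ι → ℂ} (hF : ∀ i, Differentiable ℂ fun z => F z i)
    (A : Matrix ι ι ℂ) (i : ι) : Differentiable ℂ fun z => (A *ᵥ F z) i :=
  Differentiable.fun_sum fun j _ => (hF j).const_mul _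

variable [DecidableEq ι]

def matrixOp : Matrix ι ι ℂ →ₐ[ℂ] Module.End ℂ (entireMaps ι) where
  toFun A :=
    { toFun F := ⟨fun z => A *ᵥ F.1 z, differentiable_mulVec_apply F.2 A⟩
      map_add' F G := by ext z : 2; exact Matrix.mulVec_add _ _ _
      map_smul' a F := by ext z : 2; exact Matrix.mulVec_smul A a (F.1 z) }
  map_one' := by ext F z : 3; exact Matrix.one_mulVec _
  map_mul' A B := by ext F z : 3; exact (Matrix.mulVec_mulVec _ _ _).symm
  map_zero' := by ext F z : 3; exact Matrix.zero_mulVec _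
  map_add' A B := by ext F z : 3; exact Matrix.add_mulVec _ _ _
  commutes' a := by ext F z : 3; simp [Algebra.algebraMap_eq_smul_one, Matrix.smul_mulVec]

@[simp] lemma matrixOp_apply (A : Matrix ι ι ℂ) (F : entireMaps ι) (z : ℂ) :
    (matrixOp A F : ℂ → ι → ℂ) z = A *ᵥ (F : ℂ → ι → ℂ) z := rfl

lemma commute_matrixOp_nablaOp (A : Matrix ι ι ℂ) :
    Commute (matrixOp A) (nablaOp (ι := ι)) := by
  ext F z i
  simp only [Module.End.mul_apply, matrixOp_apply, nablaOp_apply, Matrix.mulVec, dotProduct]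
  simp only [nabla, deriv_fun_sum fun j _ => ((F.2 j).const_mul (A i j)).differentiableAt,
    deriv_const_mul_field', Finset.mul_sum]
  exact Finset.sum_congr rfl fun j _ => by ring

lemma commute_matrixOp_translateOp (A : Matrix ι ι ℂ) (t : ℂ) :
    Commute (matrixOp A) (translateOp (ι := ι) t) := rfl

lemma commute_matrixOp_mulOp (A : Matrix ι ι ℂ) (φ : ℂ → ℂ) (hφ : Differentiable ℂ φ) :
    Commute (matrixOp A) (mulOp (ι := ι) φ hφ) := by
  ext F z : 3
  exact Matrix.mulVec_smul _ _ _

lemma matrixOp_exp {N : Matrix ι ι ℂ} (hN : IsNilpotent N) :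
    matrixOp (IsNilpotent.exp N) = IsNilpotent.exp (matrixOp (ι := ι) N) :=
  IsNilpotent.map_exp (A := Matrix ι ι ℂ) (B := Module.End ℂ (entireMaps ι)) hN matrixOp

end Operators

section MatNabla

variable {ι : Type*} [Fintype ι] [DecidableEq ι]

def matNabla (N : Matrix ι ι ℂ) : Module.End ℂ (entireMaps ι) := matrixOp N * nablaOp

variable {N : Matrix ι ι ℂ}

lemma isNilpotent_matNabla (hN : IsNilpotent N) : IsNilpotent (matNabla N) :=
  (commute_matrixOp_nablaOp N).isNilpotent_mul_right (hN.map matrixOp)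

lemma matNabla_neg : matNabla (-N) = -matNabla N := by
  rw [matNabla, map_neg, matNabla]
  exact LinearMap.neg_comp _ _

lemma matNabla_pow (N : Matrix ι ι ℂ) (m : ℕ) :
    matNabla N ^ m = matrixOp (N ^ m) * nablaOp ^ m := by
  rw [matNabla, (commute_matrixOp_nablaOp N).mul_pow, map_pow]

lemma commute_matrixOp_matNabla {B : Matrix ι ι ℂ} (hB : Commute N B) :
    Commute (matrixOp B) (matNabla N) :=
  (hB.symm.map matrixOp).mul_right (commute_matrixOp_nablaOp B)

lemma commute_translateOp_matNabla (t : ℂ) : Commute (translateOp t) (matNabla N) :=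
  (commute_matrixOp_translateOp N t).symm.mul_right (commute_translateOp_nablaOp t)

lemma matNabla_mul_mulOp {φ : ℂ → ℂ} (hφ : Differentiable ℂ φ) (hφ' : nabla φ = φ) :
    matNabla N * mulOp φ hφ = mulOp φ hφ * (matNabla N + matrixOp N) := by
  rw [matNabla, mul_assoc, nablaOp_mul_mulOp hφ hφ', ← mul_assoc,
    (commute_matrixOp_mulOp N φ hφ).eq, mul_assoc, mul_add, mul_one]

lemma exp_matNabla_mul_mulOp (hN : IsNilpotent N) {φ : ℂ → ℂ} (hφ : Differentiable ℂ φ)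
    (hφ' : nabla φ = φ) :
    IsNilpotent.exp (matNabla N) * mulOp φ hφ =
      mulOp φ hφ * (IsNilpotent.exp (matrixOp N) * IsNilpotent.exp (matNabla N)) := by
  have hcomm : Commute (matrixOp N) (matNabla N) := commute_matrixOp_matNabla (Commute.refl N)
  have hX : IsNilpotent (matNabla N) := isNilpotent_matNabla hN
  have hM : IsNilpotent (matrixOp (ι := ι) N) := hN.map matrixOp
  rw [← IsNilpotent.exp_add_of_commute hcomm hM hX, add_comm]
  refine Module.End.commute_exp_left_of_commute (hcomm.symm.isNilpotent_add hX hM) hX ?_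
  rw [← Module.End.mul_eq_comp, ← Module.End.mul_eq_comp, matNabla_mul_mulOp hφ hφ']

lemma coe_exp_matNabla_apply {k : ℕ} (hk : N ^ k = 0) (F : entireMaps ι) (z : ℂ) :
    (IsNilpotent.exp (matNabla N) F : ℂ → ι → ℂ) z =
      ∑ m ∈ Finset.range k,
        (m.factorial : ℂ)⁻¹ • N ^ m *ᵥ fun i => nabla^[m] (fun w => (F : ℂ → ι → ℂ) w i) z := by
  have hXk : matNabla N ^ k = 0 := by rw [matNabla_pow, hk, map_zero, zero_mul]
  rw [IsNilpotent.exp_eq_sum hXk]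
  simp only [LinearMap.sum_apply, Submodule.coe_sum, Finset.sum_apply, LinearMap.smul_apply]
  refine Finset.sum_congr rfl fun m _ => ?_
  rw [Submodule.coe_smul_of_tower, Pi.smul_apply, inv_natCast_smul_eq ℚ ℂ, matNabla_pow,
    Module.End.mul_apply, matrixOp_apply]
  congr 2
  exact funext (nablaOp_pow_apply m F z)

lemma coe_exp_matNabla_const_mul_apply {k : ℕ} (hk : N ^ k = 0) {f : ℂ → ℂ}
    (hf : Differentiable ℂ f) (u : ι → ℂ) (z : ℂ) :
    (IsNilpotent.exp (matNabla N) ⟨fun z i => u i * f z, fun i => hf.const_mul (u i)⟩ :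
        ℂ → ι → ℂ) z =
      ∑ m ∈ Finset.range k, (m.factorial : ℂ)⁻¹ • nabla^[m] f z • N ^ m *ᵥ u := by
  rw [coe_exp_matNabla_apply hk]
  refine Finset.sum_congr rfl fun m _ => ?_
  simp only [nabla_iterate_const_mul, ← Matrix.mulVec_smul]
  congr 2
  exact funext fun i => mul_comm _ _

end MatNabla

section TwistedSpace

variable {ι : Type*} [Fintype ι]

def twistedSpace (τ : ℂ) (φ : ℂ → ℂ) (A : Matrix ι ι ℂ) : Submodule ℂ (ℂ → ι → ℂ) where
  carrier := {F | (∀ i, Differentiable ℂ fun z => F z i) ∧ (∀ z, F (z + 1) = F z) ∧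
    ∀ z, F (z + τ) = φ z • A *ᵥ F z}
  add_mem' := by
    rintro F G ⟨hF, hF₁, hFτ⟩ ⟨hG, hG₁, hGτ⟩
    refine ⟨fun i => (hF i).add (hG i), fun z => ?_, fun z => ?_⟩
    · simp [hF₁, hG₁]
    · simp [hFτ, hGτ, Matrix.mulVec_add]
  zero_mem' := ⟨fun _ => differentiable_const 0, fun _ => rfl, fun _ => by simp⟩
  smul_mem' := by
    rintro a F ⟨hF, hF₁, hFτ⟩
    refine ⟨fun i => (hF i).const_smul a, fun z => ?_, fun z => ?_⟩
    · simp [hF₁]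
    · simp [hFτ, Matrix.mulVec_smul, smul_comm a]

lemma twistedSpace_le_entireMaps (τ : ℂ) (φ : ℂ → ℂ) (A : Matrix ι ι ℂ) :
    twistedSpace τ φ A ≤ entireMaps ι :=
  fun _ hF => hF.1

variable [DecidableEq ι] {τ : ℂ} {φ : ℂ → ℂ}

lemma coe_mem_twistedSpace_iff (hφ : Differentiable ℂ φ) (A : Matrix ι ι ℂ) (F : entireMaps ι) :
    (F : ℂ → ι → ℂ) ∈ twistedSpace τ φ A ↔
      translateOp 1 F = F ∧ translateOp τ F = mulOp φ hφ (matrixOp A F) := by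
  change _ ∧ _ ∧ _ ↔ _
  simp only [Subtype.ext_iff, funext_iff, translateOp_apply, mulOp_apply, matrixOp_apply]
  exact and_iff_right F.2

variable {N : Matrix ι ι ℂ}

lemma exp_matNabla_mem_twistedSpace (hN : IsNilpotent N) (hφ : Differentiable ℂ φ)
    (hφ' : nabla φ = φ) {B : Matrix ι ι ℂ} (hB : Commute N B) {F : entireMaps ι}
    (hF : (F : ℂ → ι → ℂ) ∈ twistedSpace τ φ B) :
    (IsNilpotent.exp (matNabla N) F : ℂ → ι → ℂ) ∈
      twistedSpace τ φ (IsNilpotent.exp N * B) := by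
  rw [coe_mem_twistedSpace_iff hφ] at hF ⊢
  have hX : IsNilpotent (matNabla N) := isNilpotent_matNabla hN
  have translate_comm (t : ℂ) : Commute (IsNilpotent.exp (matNabla N)) (translateOp t) :=
    IsNilpotent.commute_exp_left (commute_translateOp_matNabla t).symm hX
  have matrix_comm : Commute (IsNilpotent.exp (matNabla N)) (matrixOp B) :=
    IsNilpotent.commute_exp_left (commute_matrixOp_matNabla hB).symm hX
  constructor
  · rw [← Module.End.mul_apply, ← (translate_comm 1).eq, Module.End.mul_apply, hF.1]
  · rw [← Module.End.mul_apply, ← (translate_comm τ).eq, Module.End.mul_apply, hF.2,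
      ← Module.End.mul_apply, exp_matNabla_mul_mulOp hN hφ hφ', map_mul, matrixOp_exp hN]
    simp only [Module.End.mul_apply]
    rw [← Module.End.mul_apply (IsNilpotent.exp (matNabla N)), matrix_comm.eq,
      Module.End.mul_apply]

def twistedExpEquiv (hN : IsNilpotent N) (hφ : Differentiable ℂ φ) (hφ' : nabla φ = φ) :
    twistedSpace τ φ (1 : Matrix ι ι ℂ) ≃ₗ[ℂ] twistedSpace τ φ (IsNilpotent.exp N) where
  toFun F :=
    ⟨IsNilpotent.exp (matNabla N) (Submodule.inclusion (twistedSpace_le_entireMaps ..) F), by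
      simpa using exp_matNabla_mem_twistedSpace hN hφ hφ' (Commute.one_right N) F.2⟩
  invFun F :=
    ⟨IsNilpotent.exp (-matNabla N) (Submodule.inclusion (twistedSpace_le_entireMaps ..) F), by
      have h := exp_matNabla_mem_twistedSpace hN.neg hφ hφ'
        (IsNilpotent.commute_exp_left (Commute.refl N) hN).symm.neg_left
        (F := Submodule.inclusion (twistedSpace_le_entireMaps ..) F) F.2
      rwa [matNabla_neg, IsNilpotent.exp_neg_mul_exp_self hN] at h⟩
  map_add' F G := by ext1; simp
  map_smul' a F := by ext1; simp
  left_inv F := by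
    ext1
    change ((IsNilpotent.exp (-matNabla N) * IsNilpotent.exp (matNabla N))
      (Submodule.inclusion (twistedSpace_le_entireMaps ..) F) : ℂ → ι → ℂ) = F
    rw [IsNilpotent.exp_neg_mul_exp_self (isNilpotent_matNabla (N := N) hN)]
    rfl
  right_inv F := by
    ext1
    change ((IsNilpotent.exp (matNabla N) * IsNilpotent.exp (-matNabla N))
      (Submodule.inclusion (twistedSpace_le_entireMaps ..) F) : ℂ → ι → ℂ) = F
    rw [IsNilpotent.exp_mul_exp_neg_self (isNilpotent_matNabla (N := N) hN)]
    rfl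

variable (τ φ) in
def piVspEquiv : (ι → Vsp τ φ) ≃ₗ[ℂ] twistedSpace τ φ (1 : Matrix ι ι ℂ) where
  toFun G := ⟨fun z i => (G i : ℂ → ℂ) z, fun i => (G i).2.1,
    fun z => funext fun i => (G i).2.2.1 z, fun z => funext fun i => by simp [(G i).2.2.2 z]⟩
  invFun F := fun i => ⟨fun z => (F : ℂ → ι → ℂ) z i, F.2.1 i, fun z => congrFun (F.2.2.1 z) i,
    fun z => by simpa using congrFun (F.2.2.2 z) i⟩
  map_add' _ _ := rfl
  map_smul' _ _ := rfl
  left_inv _ := rfl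
  right_inv _ := rfl

end TwistedSpace

theorem delta_equiv_general (n : ℕ) (τ : ℂ) (v : ℂ) :
    (∀ f ∈ Vsp τ (fun z => -Complex.exp (-(2 * πc * I) * (z + v + τ))), ∀ u,
      deltaFun n f u ∈ Wsp n τ (fun z => -Complex.exp (-(2 * πc * I) * (z + v + τ)))) ∧
    ∃ δ : (↥(Vsp τ (fun z => -Complex.exp (-(2 * πc * I) * (z + v + τ)))) ⊗[ℂ]
            (Fin n × Fin n → ℂ)) ≃ₗ[ℂ]
          ↥(Wsp n τ (fun z => -Complex.exp (-(2 * πc * I) * (z + v + τ)))),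
      ∀ (f : ↥(Vsp τ (fun z => -Complex.exp (-(2 * πc * I) * (z + v + τ)))))
        (u : Fin n × Fin n → ℂ),
        (δ (f ⊗ₜ[ℂ] u) : ℂ → (Fin n × Fin n → ℂ)) = deltaFun n (f : ℂ → ℂ) u := by
  have hN := Nmat_pow_eq_zero n
  have hW : twistedSpace τ (fun z => -Complex.exp (-(2 * πc * I) * (z + v + τ)))
      (IsNilpotent.exp (Nmat n)) =
      Wsp n τ (fun z => -Complex.exp (-(2 * πc * I) * (z + v + τ))) := by
    rw [← NormedSpace.exp_eq_exp_of_isNilpotent ⟨_, hN⟩]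
    rfl
  let δ := (TensorProduct.piScalarRight ℂ ℂ _ _).trans <| (piVspEquiv _ _).trans <|
    (twistedExpEquiv ⟨_, hN⟩ (differentiable_neg_cexp_affine v τ)
      (nabla_neg_cexp_affine v τ)).trans (LinearEquiv.ofEq _ _ hW)
  have hδ (f) (u) : (δ (f ⊗ₜ[ℂ] u) : ℂ → (Fin n × Fin n → ℂ)) = deltaFun n (f : ℂ → ℂ) u :=
    funext (coe_exp_matNabla_const_mul_apply hN f.2.1 u)
  exact ⟨fun f hf u => hδ ⟨f, hf⟩ u ▸ (δ _).2, δ, hδ⟩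

/-- δ : V ⊗ ℂ^{n²} → W, δ(f⊗u) = Σ_m (∇^m f/m!)·N^m u, is a well-defined ℂ-linear
isomorphism (the sum is finite since N is nilpotent). -/
theorem delta_equiv (n : ℕ) (hn : 1 ≤ n) (τ : ℂ) (hτ : 0 < τ.im) (v : ℂ) :
    (∀ f ∈ Vsp τ (fun z => -Complex.exp (-(2 * πc * I) * (z + v + τ))), ∀ u,
      deltaFun n f u ∈ Wsp n τ (fun z => -Complex.exp (-(2 * πc * I) * (z + v + τ)))) ∧
    ∃ δ : (↥(Vsp τ (fun z => -Complex.exp (-(2 * πc * I) * (z + v + τ)))) ⊗[ℂ]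
            (Fin n × Fin n → ℂ)) ≃ₗ[ℂ]
          ↥(Wsp n τ (fun z => -Complex.exp (-(2 * πc * I) * (z + v + τ)))),
      ∀ (f : ↥(Vsp τ (fun z => -Complex.exp (-(2 * πc * I) * (z + v + τ)))))
        (u : Fin n × Fin n → ℂ),
        (δ (f ⊗ₜ[ℂ] u) : ℂ → (Fin n × Fin n → ℂ)) = deltaFun n (f : ℂ → ℂ) u :=
  delta_equiv_general n τ v
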